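/- arXiv:2210.08620 — 2 statements merged into one kernel-verified Lean document; each statement's English description precedes it below -/
import Mathlib

section
/- Let G be a bipartite graph with a level assignment lev_G derived from a BFS layering of G. If G' is obtained from G by a level-preserving partial contraction sequence, then G' is bipartite and every edge {x,y} of G' (red or black) satisfies |lev_{G'}(x) − lev_{G'}(y)| = 1. -/
/-! Core: trigraphs, contractions, contraction sequences, twin-width. -/

universe u

variable {V : Type u}

/-- A *trigraph*: a graph on the vertex set `verts` in which some edges (`Red`)
are marked red; `Adj` is the full adjacency relation (black and red edges together). -/
structure Trigraph (V : Type u) where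
  verts : Set V
  Adj : V → V → Prop
  Red : V → V → Prop

namespace Trigraph

/-- A trigraph is *proper* if its adjacency is a symmetric irreflexive relation on
its vertex set and the red edges form a subset of the edges. -/
def Proper (G : Trigraph V) : Prop :=
  (∀ u v, G.Adj u v → G.Adj v u) ∧ (∀ v, ¬ G.Adj v v) ∧
  (∀ u v, G.Adj u v → u ∈ G.verts ∧ v ∈ G.verts) ∧
  (∀ u v, G.Red u v → G.Adj u v) ∧ (∀ u v, G.Red u v → G.Red v u)

/-- The red degree of a vertex. -/
noncomputable def redDegree (G : Trigraph V) (x : V) : ℕ := {y | G.Red x y}.ncard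

/-- Contraction of the pair `x₁, x₂` of a trigraph; the contracted vertex keeps
the name `x₁` (it "stems" from `x₁` and `x₂`), and `x₂` is removed.
The contracted vertex is adjacent to the union of the neighbourhoods, and its red
neighbours are the red neighbours of `x₁` or `x₂` together with the symmetric
difference of the two neighbourhoods. -/
def contract (G : Trigraph V) (x₁ x₂ : V) : Trigraph V where
  verts := G.verts \ {x₂}
  Adj u v := u ≠ v ∧ u ∈ G.verts \ {x₂} ∧ v ∈ G.verts \ {x₂} ∧
    ((u = x₁ ∧ (G.Adj x₁ v ∨ G.Adj x₂ v)) ∨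
     (v = x₁ ∧ (G.Adj u x₁ ∨ G.Adj u x₂)) ∨
     (u ≠ x₁ ∧ v ≠ x₁ ∧ G.Adj u v))
  Red u v := u ≠ v ∧ u ∈ G.verts \ {x₂} ∧ v ∈ G.verts \ {x₂} ∧
    ((u = x₁ ∧ (G.Red x₁ v ∨ G.Red x₂ v ∨ ¬ (G.Adj x₁ v ↔ G.Adj x₂ v))) ∨
     (v = x₁ ∧ (G.Red u x₁ ∨ G.Red u x₂ ∨ ¬ (G.Adj u x₁ ↔ G.Adj u x₂))) ∨
     (u ≠ x₁ ∧ v ≠ x₁ ∧ G.Red u v))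

/-- Contraction of a pair given as an ordered pair. -/
def contractPair (G : Trigraph V) (p : V × V) : Trigraph V := G.contract p.1 p.2

/-- The trigraph obtained by performing the contractions of a list in order. -/
def applySeq (G : Trigraph V) : List (V × V) → Trigraph V
  | [] => G
  | p :: l => applySeq (G.contractPair p) l

/-- The list of contractions is a valid (partial) contraction sequence from `G`:
each step contracts two distinct current vertices. -/
def ValidSeq (G : Trigraph V) : List (V × V) → Prop
  | [] => True
  | p :: l => p.1 ∈ G.verts ∧ p.2 ∈ G.verts ∧ p.1 ≠ p.2 ∧ ValidSeq (G.contractPair p) l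

/-- All trigraphs along the contraction sequence (including the first and the last). -/
def along (G : Trigraph V) : List (V × V) → List (Trigraph V)
  | [] => [G]
  | p :: l => G :: along (G.contractPair p) l

end Trigraph

/-- An ordinary simple graph viewed as a trigraph with no red edges. -/
def SimpleGraph.toTrigraph (G : SimpleGraph V) : Trigraph V :=
  ⟨Set.univ, G.Adj, fun _ _ => False⟩

/-- The twin-width of the simple graph `G` is at most `d`: there is a contraction
sequence turning `G` into a single vertex all of whose trigraphs have maximum
red degree at most `d`. -/
def TwinWidthLE (G : SimpleGraph V) (d : ℕ) : Prop :=
  ∃ l : List (V × V), Trigraph.ValidSeq G.toTrigraph l ∧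
    (Trigraph.applySeq G.toTrigraph l).verts.Subsingleton ∧
    ∀ H ∈ Trigraph.along G.toTrigraph l, ∀ x, H.redDegree x ≤ d

/-- A bipartition witness: every edge joins `A` to its complement. -/
def IsBipartiteGraph {V : Type u} (G : SimpleGraph V) : Prop :=
  ∃ A : Set V, ∀ u v, G.Adj u v → (u ∈ A ↔ v ∉ A)


lemma walk_parity {V : Type} (G : SimpleGraph V) (A : Set V)
    (hA : ∀ u v, G.Adj u v → (u ∈ A ↔ v ∉ A)) :
    ∀ {a b : V} (p : G.Walk a b), ((a ∈ A ↔ b ∈ A) ↔ Even p.length) := by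
  intro a b p
  induction p with
  | nil => simp
  | cons h q ih =>
    have := hA _ _ h
    simp only [SimpleGraph.Walk.length_cons, Nat.even_add_one]
    tauto

lemma edge_level {V : Type} (G : SimpleGraph V) (hconn : G.Connected)
    (hbip : IsBipartiteGraph G) (r u v : V) (h : G.Adj u v) :
    ((G.dist r u : ℤ) - (G.dist r v : ℤ)).natAbs = 1 := by
  obtain ⟨A, hA⟩ := hbip
  obtain ⟨p, hp⟩ := hconn.exists_walk_length_eq_dist r u
  obtain ⟨q, hq⟩ := hconn.exists_walk_length_eq_dist r v
  have h1 := walk_parity G A hA p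
  have h2 := walk_parity G A hA q
  rw [hp] at h1; rw [hq] at h2
  have h3 := hA u v h
  have hpar : ¬ (Even (G.dist r u) ↔ Even (G.dist r v)) := by tauto
  have huv : G.dist u v = 1 := SimpleGraph.dist_eq_one_iff_adj.mpr h
  have hvu : G.dist v u = 1 := SimpleGraph.dist_eq_one_iff_adj.mpr h.symm
  have t1 : G.dist r v ≤ G.dist r u + G.dist u v := hconn.dist_triangle
  have t2 : G.dist r u ≤ G.dist r v + G.dist v u := hconn.dist_triangle
  rw [Nat.even_iff, Nat.even_iff] at hpar
  omega

lemma applySeq_level {V : Type} (G : SimpleGraph V) (r : V) :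
    ∀ (l : List (V × V)) (H : Trigraph V),
      (∀ p ∈ l, G.dist r p.1 = G.dist r p.2) →
      (∀ u v, H.Adj u v → ((G.dist r u : ℤ) - (G.dist r v : ℤ)).natAbs = 1) →
      ∀ u v, (Trigraph.applySeq H l).Adj u v →
        ((G.dist r u : ℤ) - (G.dist r v : ℤ)).natAbs = 1 := by
  intro l
  induction l with
  | nil => intro H _ hH; exact hH
  | cons p l ih =>
    intro H hlev hH
    apply ih
    · intro q hq; exact hlev q (List.mem_cons_of_mem _ hq)
    · intro u v huv
      obtain ⟨hne, hu, hv, hc⟩ := huv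
      have hp : G.dist r p.1 = G.dist r p.2 := hlev p List.mem_cons_self
      rcases hc with ⟨rfl, h | h⟩ | ⟨rfl, h | h⟩ | ⟨_, _, h⟩
      · exact hH _ _ h
      · have := hH _ _ h; omega
      · exact hH _ _ h
      · have := hH _ _ h; omega
      · exact hH _ _ h

/-- Lemma 4.1 of the paper. Let `G` be a connected bipartite graph with
the level assignment given by the BFS layering from a root `r` (levels `G.dist r ·`).
If `G'` is obtained from `G` by a level-preserving partial contraction sequence
(each step contracts two vertices of the same level, the contracted vertex - here
named by its first member - inheriting the level), then `G'` is bipartite and every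
edge `{x, y}` of `G'` (red or black) satisfies `|lev x - lev y| = 1`. -/
theorem bipartite_level_preserving {V : Type} (G : SimpleGraph V) (hconn : G.Connected)
    (hbip : IsBipartiteGraph G) (r : V) (l : List (V × V))
    (hvalid : Trigraph.ValidSeq G.toTrigraph l)
    (hlp : ∀ p ∈ l, G.dist r p.1 = G.dist r p.2)
    (G' : Trigraph V) (hG' : G' = Trigraph.applySeq G.toTrigraph l) :
    (∃ A : Set V, ∀ u v, G'.Adj u v → (u ∈ A ↔ v ∉ A)) ∧
    (∀ u v, G'.Adj u v → ((G.dist r u : ℤ) - (G.dist r v : ℤ)).natAbs = 1) := by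
  subst hG'
  have hlev : ∀ u v, (Trigraph.applySeq G.toTrigraph l).Adj u v →
      ((G.dist r u : ℤ) - (G.dist r v : ℤ)).natAbs = 1 := by
    apply applySeq_level G r l G.toTrigraph hlp
    intro u v huv
    exact edge_level G hconn hbip r u v huv
  refine ⟨⟨{v | Even (G.dist r v)}, ?_⟩, hlev⟩
  intro u v huv
  have h1 := hlev u v huv
  simp only [Set.mem_setOf_eq, Nat.even_iff]
  omega
end

section
/- Let G be a simple graph and π a partial contraction sequence of G resulting in a trigraph H1; let the same sequence π (the same pairs of vertices contracted, V(G^(2))=V(G)) applied to the square G^(2) result in a trigraph H2. If {u,w} is a red edge of H2, then H1 contains a path of length at most 2 from u to w, but no such path consisting only of black edge(s). -/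
/-! Core: trigraphs, contractions, contraction sequences, twin-width. -/

universe u

variable {V : Type u}

/-- The square of a graph: `u,v` adjacent iff `u ≠ v` are at distance at most 2. -/
def graphSquare {V : Type u} (G : SimpleGraph V) : SimpleGraph V where
  Adj u v := u ≠ v ∧ (G.Adj u v ∨ ∃ w, G.Adj u w ∧ G.Adj w v)
  symm := by
    constructor
    rintro u v ⟨h, h'⟩
    refine ⟨h.symm, ?_⟩
    rcases h' with h' | ⟨w, hw1, hw2⟩
    · exact Or.inl h'.symm
    · exact Or.inr ⟨w, hw2.symm, hw1.symm⟩
  loopless := by constructor; rintro v ⟨h, -⟩; exact h rfl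

-- ==================== AUX ====================
section AuxRES

variable {V : Type u}

open Trigraph

open Classical in
/-- The vertex map induced by one contraction. -/
noncomputable def cstepRES (x₁ x₂ : V) (f : V → V) : V → V :=
  fun v => if f v = x₂ then x₁ else f v

/-- Key invariant relating a trigraph obtained by contractions from a simple
graph `G₀` to the block map `f`. -/
structure InvRES (G₀ : SimpleGraph V) (H : Trigraph V) (f : V → V) : Prop where
  surj : ∀ x ∈ H.verts, ∃ a, f a = x
  mem : ∀ a, f a ∈ H.verts
  adj_iff : ∀ u v, H.Adj u v ↔ u ≠ v ∧ u ∈ H.verts ∧ v ∈ H.verts ∧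
      ∃ a b, f a = u ∧ f b = v ∧ G₀.Adj a b
  red_iff : ∀ u v, H.Red u v ↔ u ≠ v ∧ u ∈ H.verts ∧ v ∈ H.verts ∧
      (∃ a b, f a = u ∧ f b = v ∧ G₀.Adj a b) ∧
      (∃ a b, f a = u ∧ f b = v ∧ ¬ G₀.Adj a b)

variable {x₁ x₂ : V} {f : V → V}

lemma cstepRES_eq₂ (a : V) (h : f a = x₂) : cstepRES x₁ x₂ f a = x₁ := by
  classical simp [cstepRES, h]

lemma cstepRES_eq₃ (a : V) (h : f a ≠ x₂) : cstepRES x₁ x₂ f a = f a := by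
  classical simp [cstepRES, h]

lemma cstepRES_eq₁ (a : V) (h : f a = x₁) (h12 : x₁ ≠ x₂) : cstepRES x₁ x₂ f a = x₁ := by
  rw [cstepRES_eq₃ a (by rw [h]; exact h12)]; exact h

lemma cstepRES_eq_iff (a u : V) (hu : u ≠ x₂) :
    cstepRES x₁ x₂ f a = u ↔ f a = u ∨ (u = x₁ ∧ f a = x₂) := by
  classical
  by_cases h : f a = x₂
  · rw [show cstepRES x₁ x₂ f a = x₁ from cstepRES_eq₂ a h]
    constructor
    · intro hh; exact Or.inr ⟨hh.symm, h⟩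
    · rintro (hh | ⟨hh, -⟩)
      · exact absurd (h ▸ hh).symm hu
      · exact hh.symm
  · rw [cstepRES_eq₃ a h]
    constructor
    · exact Or.inl
    · rintro (hh | ⟨-, hh⟩)
      · exact hh
      · exact absurd hh h

/-- The core of the red case: from mixed pairs against the blocks of `x₁, x₂`,
deduce the red condition of the contraction. -/
lemma redCoreRES {G₀ : SimpleGraph V} {H : Trigraph V}
    (hI : InvRES G₀ H f) (h1 : x₁ ∈ H.verts) (h2 : x₂ ∈ H.verts)
    {v : V} (hvx1 : v ≠ x₁) (hvx2 : v ≠ x₂) (hv : v ∈ H.verts)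
    (hA : ∃ a b, (f a = x₁ ∨ f a = x₂) ∧ f b = v ∧ G₀.Adj a b)
    (hN : ∃ a b, (f a = x₁ ∨ f a = x₂) ∧ f b = v ∧ ¬ G₀.Adj a b) :
    H.Red x₁ v ∨ H.Red x₂ v ∨ ¬ (H.Adj x₁ v ↔ H.Adj x₂ v) := by
  obtain ⟨a, b, ha, hb, hab⟩ := hA
  obtain ⟨a', b', ha', hb', hab'⟩ := hN
  rcases ha with ha | ha <;> rcases ha' with ha' | ha'
  · exact Or.inl ((hI.red_iff x₁ v).2
      ⟨Ne.symm hvx1, h1, hv, ⟨a, b, ha, hb, hab⟩, ⟨a', b', ha', hb', hab'⟩⟩)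
  · -- adjacent pair at x₁, non-adjacent pair at x₂
    have hA1 : H.Adj x₁ v := (hI.adj_iff x₁ v).2 ⟨Ne.symm hvx1, h1, hv, a, b, ha, hb, hab⟩
    by_cases hA2 : H.Adj x₂ v
    · obtain ⟨-, -, -, c, d, hc, hd, hcd⟩ := (hI.adj_iff x₂ v).1 hA2
      exact Or.inr (Or.inl ((hI.red_iff x₂ v).2
        ⟨Ne.symm hvx2, h2, hv, ⟨c, d, hc, hd, hcd⟩, ⟨a', b', ha', hb', hab'⟩⟩))
    · exact Or.inr (Or.inr fun h => hA2 (h.1 hA1))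
  · -- adjacent pair at x₂, non-adjacent pair at x₁
    have hA2 : H.Adj x₂ v := (hI.adj_iff x₂ v).2 ⟨Ne.symm hvx2, h2, hv, a, b, ha, hb, hab⟩
    by_cases hA1 : H.Adj x₁ v
    · obtain ⟨-, -, -, c, d, hc, hd, hcd⟩ := (hI.adj_iff x₁ v).1 hA1
      exact Or.inl ((hI.red_iff x₁ v).2
        ⟨Ne.symm hvx1, h1, hv, ⟨c, d, hc, hd, hcd⟩, ⟨a', b', ha', hb', hab'⟩⟩)
    · exact Or.inr (Or.inr fun h => hA1 (h.2 hA2))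
  · exact Or.inr (Or.inl ((hI.red_iff x₂ v).2
      ⟨Ne.symm hvx2, h2, hv, ⟨a, b, ha, hb, hab⟩, ⟨a', b', ha', hb', hab'⟩⟩))

lemma inv_contractRES {G₀ : SimpleGraph V} {H : Trigraph V}
    (hI : InvRES G₀ H f) (h1 : x₁ ∈ H.verts) (h2 : x₂ ∈ H.verts) (h12 : x₁ ≠ x₂) :
    InvRES G₀ (H.contract x₁ x₂) (cstepRES x₁ x₂ f) := by
  have hAs : ∀ u v, H.Adj u v → H.Adj v u := by
    intro u v h
    obtain ⟨hne, hu, hv, a, b, ha, hb, hab⟩ := (hI.adj_iff u v).1 h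
    exact (hI.adj_iff v u).2 ⟨hne.symm, hv, hu, b, a, hb, ha, hab.symm⟩
  constructor
  · -- surj
    rintro x ⟨hx, hx2⟩
    simp only [Set.mem_singleton_iff] at hx2
    obtain ⟨a, ha⟩ := hI.surj x hx
    exact ⟨a, by rw [cstepRES_eq₃ a (by rw [ha]; exact hx2)]; exact ha⟩
  · -- mem
    intro a
    classical
    by_cases h : f a = x₂
    · rw [cstepRES_eq₂ a h]; exact ⟨h1, by simpa using h12⟩
    · rw [cstepRES_eq₃ a h]; exact ⟨hI.mem a, by simpa using h⟩
  · -- adj_iff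
    intro u v
    show (u ≠ v ∧ _ ∧ _ ∧ _) ↔ _
    constructor
    · rintro ⟨hne, hu, hv, hc⟩
      refine ⟨hne, hu, hv, ?_⟩
      have hvx2 : v ≠ x₂ := by simpa using hv.2
      have hux2 : u ≠ x₂ := by simpa using hu.2
      rcases hc with ⟨rfl, hc | hc⟩ | ⟨rfl, hc | hc⟩ | ⟨hu1, hv1, hc⟩
      · obtain ⟨-, -, -, a, b, ha, hb, hab⟩ := (hI.adj_iff _ _).1 hc
        exact ⟨a, b, cstepRES_eq₁ a ha h12, by rw [cstepRES_eq₃ b (by rw [hb]; exact hvx2)]; exact hb, hab⟩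
      · obtain ⟨-, -, -, a, b, ha, hb, hab⟩ := (hI.adj_iff _ _).1 hc
        exact ⟨a, b, cstepRES_eq₂ a ha, by rw [cstepRES_eq₃ b (by rw [hb]; exact hvx2)]; exact hb, hab⟩
      · obtain ⟨-, -, -, a, b, ha, hb, hab⟩ := (hI.adj_iff _ _).1 hc
        exact ⟨a, b, by rw [cstepRES_eq₃ a (by rw [ha]; exact hux2)]; exact ha, cstepRES_eq₁ b hb h12, hab⟩
      · obtain ⟨-, -, -, a, b, ha, hb, hab⟩ := (hI.adj_iff _ _).1 hc
        exact ⟨a, b, by rw [cstepRES_eq₃ a (by rw [ha]; exact hux2)]; exact ha, cstepRES_eq₂ b hb, hab⟩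
      · obtain ⟨-, -, -, a, b, ha, hb, hab⟩ := (hI.adj_iff _ _).1 hc
        exact ⟨a, b, by rw [cstepRES_eq₃ a (by rw [ha]; exact hux2)]; exact ha,
          by rw [cstepRES_eq₃ b (by rw [hb]; exact hvx2)]; exact hb, hab⟩
    · rintro ⟨hne, hu, hv, a, b, ha, hb, hab⟩
      refine ⟨hne, hu, hv, ?_⟩
      have hvx2 : v ≠ x₂ := by simpa using hv.2
      have hux2 : u ≠ x₂ := by simpa using hu.2
      rw [cstepRES_eq_iff a u hux2] at ha
      rw [cstepRES_eq_iff b v hvx2] at hb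
      by_cases hux1 : u = x₁
      · subst hux1
        have hvx1 : v ≠ u := Ne.symm hne
        have hfb : f b = v := by rcases hb with hb | ⟨hb, -⟩; exact hb; exact absurd hb hvx1
        refine Or.inl ⟨rfl, ?_⟩
        rcases ha with ha | ⟨-, ha⟩
        · exact Or.inl ((hI.adj_iff _ _).2 ⟨Ne.symm hvx1, h1, hv.1, a, b, ha, hfb, hab⟩)
        · exact Or.inr ((hI.adj_iff _ _).2 ⟨Ne.symm hvx2, h2, hv.1, a, b, ha, hfb, hab⟩)
      · have hfa : f a = u := by rcases ha with ha | ⟨ha, -⟩; exact ha; exact absurd ha hux1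
        by_cases hvx1 : v = x₁
        · subst hvx1
          refine Or.inr (Or.inl ⟨rfl, ?_⟩)
          rcases hb with hb | ⟨-, hb⟩
          · exact Or.inl ((hI.adj_iff _ _).2 ⟨hne, hu.1, h1, a, b, hfa, hb, hab⟩)
          · exact Or.inr ((hI.adj_iff _ _).2 ⟨hux2, hu.1, h2, a, b, hfa, hb, hab⟩)
        · have hfb : f b = v := by rcases hb with hb | ⟨hb, -⟩; exact hb; exact absurd hb hvx1
          exact Or.inr (Or.inr ⟨hux1, hvx1,
            (hI.adj_iff _ _).2 ⟨hne, hu.1, hv.1, a, b, hfa, hfb, hab⟩⟩)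
  · -- red_iff
    intro u v
    show (u ≠ v ∧ _ ∧ _ ∧ _) ↔ _
    constructor
    · rintro ⟨hne, hu, hv, hc⟩
      refine ⟨hne, hu, hv, ?_⟩
      have hvx2 : v ≠ x₂ := by simpa using hv.2
      have hux2 : u ≠ x₂ := by simpa using hu.2
      -- helper to lift pairs
      have lift1 : ∀ {y : V} (b : V), y ≠ x₂ → f b = y → cstepRES x₁ x₂ f b = y := by
        intro y b hy hb
        rw [cstepRES_eq₃ b (by rw [hb]; exact hy)]; exact hb
      rcases hc with ⟨rfl, hc⟩ | ⟨rfl, hc⟩ | ⟨hu1, hv1, hc⟩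
      · -- u = x₁
        rcases hc with hc | hc | hc
        · obtain ⟨-, -, -, ⟨a, b, ha, hb, hab⟩, ⟨a', b', ha', hb', hab'⟩⟩ := (hI.red_iff _ _).1 hc
          exact ⟨⟨a, b, cstepRES_eq₁ a ha h12, lift1 b hvx2 hb, hab⟩,
                 ⟨a', b', cstepRES_eq₁ a' ha' h12, lift1 b' hvx2 hb', hab'⟩⟩
        · obtain ⟨-, -, -, ⟨a, b, ha, hb, hab⟩, ⟨a', b', ha', hb', hab'⟩⟩ := (hI.red_iff _ _).1 hc
          exact ⟨⟨a, b, cstepRES_eq₂ a ha, lift1 b hvx2 hb, hab⟩,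
                 ⟨a', b', cstepRES_eq₂ a' ha', lift1 b' hvx2 hb', hab'⟩⟩
        · -- symmetric difference
          by_cases hA1 : H.Adj u v
          · have hA2 : ¬ H.Adj x₂ v := fun h => hc ⟨fun _ => h, fun _ => hA1⟩
            obtain ⟨-, -, -, a, b, ha, hb, hab⟩ := (hI.adj_iff _ _).1 hA1
            obtain ⟨a', ha'⟩ := hI.surj x₂ h2
            have hnab : ¬ G₀.Adj a' b := fun h =>
              hA2 ((hI.adj_iff _ _).2 ⟨Ne.symm hvx2, h2, hv.1, a', b, ha', hb, h⟩)
            exact ⟨⟨a, b, cstepRES_eq₁ a ha h12, lift1 b hvx2 hb, hab⟩,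
                   ⟨a', b, cstepRES_eq₂ a' ha', lift1 b hvx2 hb, hnab⟩⟩
          · have hA2 : H.Adj x₂ v := by
              by_contra hA2
              exact hc ⟨fun h => absurd h hA1, fun h => absurd h hA2⟩
            obtain ⟨-, -, -, a, b, ha, hb, hab⟩ := (hI.adj_iff _ _).1 hA2
            obtain ⟨a', ha'⟩ := hI.surj u h1
            have hnab : ¬ G₀.Adj a' b := fun h =>
              hA1 ((hI.adj_iff _ _).2 ⟨hne, h1, hv.1, a', b, ha', hb, h⟩)
            exact ⟨⟨a, b, cstepRES_eq₂ a ha, lift1 b hvx2 hb, hab⟩,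
                   ⟨a', b, cstepRES_eq₁ a' ha' h12, lift1 b hvx2 hb, hnab⟩⟩
      · -- v = x₁ : symmetric to previous case
        rcases hc with hc | hc | hc
        · obtain ⟨-, -, -, ⟨a, b, ha, hb, hab⟩, ⟨a', b', ha', hb', hab'⟩⟩ := (hI.red_iff _ _).1 hc
          exact ⟨⟨a, b, lift1 a hux2 ha, cstepRES_eq₁ b hb h12, hab⟩,
                 ⟨a', b', lift1 a' hux2 ha', cstepRES_eq₁ b' hb' h12, hab'⟩⟩
        · obtain ⟨-, -, -, ⟨a, b, ha, hb, hab⟩, ⟨a', b', ha', hb', hab'⟩⟩ := (hI.red_iff _ _).1 hc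
          exact ⟨⟨a, b, lift1 a hux2 ha, cstepRES_eq₂ b hb, hab⟩,
                 ⟨a', b', lift1 a' hux2 ha', cstepRES_eq₂ b' hb', hab'⟩⟩
        · by_cases hA1 : H.Adj u v
          · have hA2 : ¬ H.Adj u x₂ := fun h => hc ⟨fun _ => h, fun _ => hA1⟩
            obtain ⟨-, -, -, a, b, ha, hb, hab⟩ := (hI.adj_iff _ _).1 hA1
            obtain ⟨b', hb'⟩ := hI.surj x₂ h2
            have hnab : ¬ G₀.Adj a b' := fun h =>
              hA2 ((hI.adj_iff _ _).2 ⟨hux2, hu.1, h2, a, b', ha, hb', h⟩)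
            exact ⟨⟨a, b, lift1 a hux2 ha, cstepRES_eq₁ b hb h12, hab⟩,
                   ⟨a, b', lift1 a hux2 ha, cstepRES_eq₂ b' hb', hnab⟩⟩
          · have hA2 : H.Adj u x₂ := by
              by_contra hA2
              exact hc ⟨fun h => absurd h hA1, fun h => absurd h hA2⟩
            obtain ⟨-, -, -, a, b, ha, hb, hab⟩ := (hI.adj_iff _ _).1 hA2
            obtain ⟨b', hb'⟩ := hI.surj v h1
            have hnab : ¬ G₀.Adj a b' := fun h =>
              hA1 ((hI.adj_iff _ _).2 ⟨hne, hu.1, h1, a, b', ha, hb', h⟩)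
            exact ⟨⟨a, b, lift1 a hux2 ha, cstepRES_eq₂ b hb, hab⟩,
                   ⟨a, b', lift1 a hux2 ha, cstepRES_eq₁ b' hb' h12, hnab⟩⟩
      · obtain ⟨-, -, -, ⟨a, b, ha, hb, hab⟩, ⟨a', b', ha', hb', hab'⟩⟩ := (hI.red_iff _ _).1 hc
        exact ⟨⟨a, b, lift1 a hux2 ha, lift1 b hvx2 hb, hab⟩,
               ⟨a', b', lift1 a' hux2 ha', lift1 b' hvx2 hb', hab'⟩⟩
    · rintro ⟨hne, hu, hv, ⟨a, b, ha, hb, hab⟩, ⟨a', b', ha', hb', hab'⟩⟩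
      refine ⟨hne, hu, hv, ?_⟩
      have hvx2 : v ≠ x₂ := by simpa using hv.2
      have hux2 : u ≠ x₂ := by simpa using hu.2
      rw [cstepRES_eq_iff a u hux2] at ha
      rw [cstepRES_eq_iff b v hvx2] at hb
      rw [cstepRES_eq_iff a' u hux2] at ha'
      rw [cstepRES_eq_iff b' v hvx2] at hb'
      by_cases hux1 : u = x₁
      · subst hux1
        have hvx1 : v ≠ u := Ne.symm hne
        have hfb : f b = v := by rcases hb with hb | ⟨hb, -⟩; exact hb; exact absurd hb hvx1
        have hfb' : f b' = v := by rcases hb' with hb | ⟨hb, -⟩; exact hb; exact absurd hb hvx1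
        refine Or.inl ⟨rfl, ?_⟩
        refine redCoreRES hI h1 h2 hvx1 hvx2 hv.1 ?_ ?_
        · rcases ha with ha | ⟨-, ha⟩
          · exact ⟨a, b, Or.inl ha, hfb, hab⟩
          · exact ⟨a, b, Or.inr ha, hfb, hab⟩
        · rcases ha' with ha | ⟨-, ha⟩
          · exact ⟨a', b', Or.inl ha, hfb', hab'⟩
          · exact ⟨a', b', Or.inr ha, hfb', hab'⟩
      · have hfa : f a = u := by rcases ha with ha | ⟨ha, -⟩; exact ha; exact absurd ha hux1
        have hfa' : f a' = u := by rcases ha' with ha | ⟨ha, -⟩; exact ha; exact absurd ha hux1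
        by_cases hvx1 : v = x₁
        · subst hvx1
          refine Or.inr (Or.inl ⟨rfl, ?_⟩)
          have key := redCoreRES hI h1 h2 (fun h => hux1 h : u ≠ v) hux2 hu.1 ?_ ?_
          · -- convert from Red x₁ u / x₂ u to Red u x₁ / u x₂
            have hRs : ∀ y z, H.Red y z → H.Red z y := by
              intro y z h
              obtain ⟨hyz, hy, hz, ⟨c, d, hc, hd, hcd⟩, ⟨c', d', hc', hd', hcd'⟩⟩ :=
                (hI.red_iff y z).1 h
              exact (hI.red_iff z y).2 ⟨hyz.symm, hz, hy, ⟨d, c, hd, hc, hcd.symm⟩,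
                ⟨d', c', hd', hc', fun hh => hcd' hh.symm⟩⟩
            rcases key with h | h | h
            · exact Or.inl (hRs _ _ h)
            · exact Or.inr (Or.inl (hRs _ _ h))
            · exact Or.inr (Or.inr (fun hh => h ⟨fun h1' => hAs _ _ (hh.1 (hAs _ _ h1')),
                fun h2' => hAs _ _ (hh.2 (hAs _ _ h2'))⟩))
          · rcases hb with hbv | ⟨-, hbv⟩
            · exact ⟨b, a, Or.inl hbv, hfa, hab.symm⟩
            · exact ⟨b, a, Or.inr hbv, hfa, hab.symm⟩
          · rcases hb' with hbv | ⟨-, hbv⟩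
            · exact ⟨b', a', Or.inl hbv, hfa', fun hh => hab' hh.symm⟩
            · exact ⟨b', a', Or.inr hbv, hfa', fun hh => hab' hh.symm⟩
        · have hfb : f b = v := by rcases hb with hb | ⟨hb, -⟩; exact hb; exact absurd hb hvx1
          have hfb' : f b' = v := by rcases hb' with hb | ⟨hb, -⟩; exact hb; exact absurd hb hvx1
          exact Or.inr (Or.inr ⟨hux1, hvx1, (hI.red_iff _ _).2
            ⟨hne, hu.1, hv.1, ⟨a, b, hfa, hfb, hab⟩, ⟨a', b', hfa', hfb', hab'⟩⟩⟩)

lemma inv_initRES (G₀ : SimpleGraph V) : InvRES G₀ G₀.toTrigraph id := by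
  constructor
  · exact fun x _ => ⟨x, rfl⟩
  · exact fun a => Set.mem_univ a
  · intro u v
    constructor
    · intro h
      exact ⟨(SimpleGraph.Adj.ne h : u ≠ v), Set.mem_univ u, Set.mem_univ v, u, v, rfl, rfl, h⟩
    · rintro ⟨-, -, -, a, b, rfl, rfl, hab⟩
      exact hab
  · intro u v
    constructor
    · rintro ⟨⟩
    · rintro ⟨-, -, -, ⟨a, b, ha, hb, hab⟩, ⟨a', b', ha', hb', hab'⟩⟩
      simp only [id_eq] at ha hb ha' hb'
      subst ha; subst hb; subst ha'; subst hb'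
      exact hab' hab

lemma inv_applySeqRES {G₀ : SimpleGraph V} :
    ∀ (l : List (V × V)) (H : Trigraph V) (f : V → V),
      InvRES G₀ H f → Trigraph.ValidSeq H l →
      InvRES G₀ (Trigraph.applySeq H l)
        (l.foldl (fun f p => cstepRES p.1 p.2 f) f)
  | [], H, f, hI, _ => hI
  | p :: l, H, f, hI, hval =>
    inv_applySeqRES l (H.contractPair p) (cstepRES p.1 p.2 f)
      (inv_contractRES hI hval.1 hval.2.1 hval.2.2.1) hval.2.2.2

lemma verts_applySeqRES :
    ∀ (l : List (V × V)) (T T' : Trigraph V), T.verts = T'.verts →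
      (Trigraph.applySeq T l).verts = (Trigraph.applySeq T' l).verts
  | [], T, T', h => h
  | p :: l, T, T', h =>
    verts_applySeqRES l (T.contractPair p) (T'.contractPair p)
      (by show T.verts \ _ = T'.verts \ _; rw [h])

lemma validSeq_congrRES :
    ∀ (l : List (V × V)) (T T' : Trigraph V), T.verts = T'.verts →
      Trigraph.ValidSeq T l → Trigraph.ValidSeq T' l
  | [], _, _, _, _ => trivial
  | p :: l, T, T', h, hv =>
    ⟨h ▸ hv.1, h ▸ hv.2.1, hv.2.2.1,
      validSeq_congrRES l (T.contractPair p) (T'.contractPair p)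
        (by show T.verts \ _ = T'.verts \ _; rw [h]) hv.2.2.2⟩

end AuxRES

/-- Lemma 6.3 of the paper. Let `G` be a simple graph and `π` a
partial contraction sequence of `G` resulting in a trigraph `H₁`; let the same
sequence applied to the square of `G` result in a trigraph `H₂`. If `{u, w}` is a
red edge of `H₂`, then `H₁` contains a path of length at most `2` from `u` to `w`,
but no such path consisting only of black edges. -/
theorem red_edge_of_square_sequence {V : Type} (G : SimpleGraph V) (l : List (V × V))
    (hvalid : Trigraph.ValidSeq G.toTrigraph l)
    (H₁ H₂ : Trigraph V)
    (hH₁ : H₁ = Trigraph.applySeq G.toTrigraph l)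
    (hH₂ : H₂ = Trigraph.applySeq (graphSquare G).toTrigraph l)
    (u w : V) (hred : H₂.Red u w) :
    (H₁.Adj u w ∨ ∃ t, H₁.Adj u t ∧ H₁.Adj t w) ∧
    ¬ ((H₁.Adj u w ∧ ¬ H₁.Red u w) ∨
        ∃ t, (H₁.Adj u t ∧ ¬ H₁.Red u t) ∧ (H₁.Adj t w ∧ ¬ H₁.Red t w)) := by
  subst hH₁ hH₂
  have hval₂ : Trigraph.ValidSeq (graphSquare G).toTrigraph l :=
    validSeq_congrRES l G.toTrigraph (graphSquare G).toTrigraph rfl hvalid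
  have I1 := inv_applySeqRES l G.toTrigraph id (inv_initRES G) hvalid
  have I2 := inv_applySeqRES l (graphSquare G).toTrigraph id (inv_initRES (graphSquare G)) hval₂
  have hV : (Trigraph.applySeq (graphSquare G).toTrigraph l).verts
      = (Trigraph.applySeq G.toTrigraph l).verts :=
    verts_applySeqRES l _ _ rfl
  set F := l.foldl (fun f p => cstepRES p.1 p.2 f) (id : V → V) with hF
  set H₁ := Trigraph.applySeq G.toTrigraph l with hh1
  set H₂ := Trigraph.applySeq (graphSquare G).toTrigraph l with hh2
  obtain ⟨hne, hu2, hw2, ⟨a, b, ha, hb, hab⟩, ⟨a', b', ha', hb', hnab⟩⟩ := (I2.red_iff u w).1 hred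
  have hu1 : u ∈ H₁.verts := hV ▸ hu2
  have hw1 : w ∈ H₁.verts := hV ▸ hw2
  have hne' : a' ≠ b' := fun h => hne (by rw [← ha', ← hb', h])
  constructor
  · obtain ⟨hab_ne, h'⟩ := hab
    rcases h' with h | ⟨c, h1c, h2c⟩
    · exact Or.inl ((I1.adj_iff u w).2 ⟨hne, hu1, hw1, a, b, ha, hb, h⟩)
    · by_cases htu : F c = u
      · exact Or.inl ((I1.adj_iff u w).2 ⟨hne, hu1, hw1, c, b, htu, hb, h2c⟩)
      · by_cases htw : F c = w
        · exact Or.inl ((I1.adj_iff u w).2 ⟨hne, hu1, hw1, a, c, ha, htw, h1c⟩)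
        · exact Or.inr ⟨F c,
            (I1.adj_iff u (F c)).2 ⟨fun h => htu h.symm, hu1, I1.mem c, a, c, ha, rfl, h1c⟩,
            (I1.adj_iff (F c) w).2 ⟨htw, I1.mem c, hw1, c, b, rfl, hb, h2c⟩⟩
  · rintro (⟨hA, hR⟩ | ⟨t, ⟨hA1, hR1⟩, ⟨hA2, hR2⟩⟩)
    · have hcomp : ∀ x y, F x = u → F y = w → G.Adj x y := by
        intro x y hx hy
        by_contra hxy
        obtain ⟨-, -, -, p, q, hp, hq, hpq⟩ := (I1.adj_iff u w).1 hA
        exact hR ((I1.red_iff u w).2 ⟨hne, hu1, hw1, ⟨p, q, hp, hq, hpq⟩, ⟨x, y, hx, hy, hxy⟩⟩)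
      exact hnab ⟨hne', Or.inl (hcomp a' b' ha' hb')⟩
    · obtain ⟨hnut, -, ht1, a₀, c, ha₀, hc, h₀⟩ := (I1.adj_iff u t).1 hA1
      have hntw : t ≠ w := ((I1.adj_iff t w).1 hA2).1
      have hcomp1 : ∀ x y, F x = u → F y = t → G.Adj x y := by
        intro x y hx hy; by_contra hxy
        exact hR1 ((I1.red_iff u t).2 ⟨hnut, hu1, ht1, ⟨a₀, c, ha₀, hc, h₀⟩, ⟨x, y, hx, hy, hxy⟩⟩)
      obtain ⟨-, -, -, c₀, b₀, hc₀, hb₀, h₁⟩ := (I1.adj_iff t w).1 hA2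
      have hcomp2 : ∀ x y, F x = t → F y = w → G.Adj x y := by
        intro x y hx hy; by_contra hxy
        exact hR2 ((I1.red_iff t w).2 ⟨hntw, ht1, hw1, ⟨c₀, b₀, hc₀, hb₀, h₁⟩, ⟨x, y, hx, hy, hxy⟩⟩)
      exact hnab ⟨hne', Or.inr ⟨c, hcomp1 a' c ha' hc, hcomp2 c b' hc hb'⟩⟩
end
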